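/- arXiv:2106.15455 — 2 statements merged into one kernel-verified Lean document; each statement's English description precedes it below -/
import Mathlib

section
/- Let N ≥ 1 be a natural number, let α, β be real numbers with (α+2)_N ≠ 0 and with (−β−N)_k ≠ 0 for 0 ≤ k ≤ N, and let z be a nonzero complex number. Then (Γ(N+1)/(α+2)_N) · ∑_{m=0}^{N−1} [(α+1)_m (β+1)_{N−m}]/[(N−m)! m!] · z^{−m} = [(β+1)_N/(α+2)_N] · ∑_{k=0}^N [(−N)_k (α+1)_k]/[(−β−N)_k k!] · z^{−k} − [(α+1)_N/(α+2)_N] · z^{−N}. -/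
/-- The Pochhammer symbol `(a)_k = a (a+1) ⋯ (a+k-1)` over ℂ. -/
noncomputable def poch (a : ℂ) (k : ℕ) : ℂ := (ascPochhammer ℂ k).eval a

lemma poch_succ (a : ℂ) (n : ℕ) : poch a (n + 1) = poch a n * (a + n) := by
  rw [poch, ascPochhammer_succ_eval, ← poch]

lemma poch_one_eq (n : ℕ) : poch 1 n = n.factorial := by
  rw [poch, ascPochhammer_eval_one]

lemma poch_key (b : ℂ) (n : ℕ) :
    ∀ k, k ≤ n → poch (b + 1) (n - k) * poch (-b - n) k = (-1 : ℂ) ^ k * poch (b + 1) n := by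
  intro k
  induction k with
  | zero => intro _; simp [poch]
  | succ k ih =>
      intro hk
      have hk' : k ≤ n := Nat.le_of_succ_le hk
      have h1 : n - k = (n - (k + 1)) + 1 := by omega
      have hcast : ((n - (k + 1) : ℕ) : ℂ) = (n : ℂ) - k - 1 := by
        have : ((n - (k+1) : ℕ) : ℂ) = ((n : ℕ) : ℂ) - ((k+1 : ℕ) : ℂ) := by
          rw [Nat.cast_sub hk]
        rw [this]; push_cast; ring
      have := ih hk'
      rw [h1, poch_succ] at this
      rw [poch_succ]
      calc poch (b + 1) (n - (k + 1)) * (poch (-b - ↑n) k * (-b - ↑n + ↑k))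
          = -((poch (b + 1) (n - (k+1)) * (b + 1 + ((n : ℂ) - k - 1))) * poch (-b - ↑n) k) := by
            ring
        _ = -((-1:ℂ)^k * poch (b+1) n) := by rw [← hcast, this]
        _ = (-1:ℂ)^(k+1) * poch (b+1) n := by ring

lemma poch_nat_key (n : ℕ) : ∀ k, k ≤ n →
    ((n - k).factorial : ℂ) * poch (-(n : ℂ)) k = (-1 : ℂ) ^ k * (n.factorial : ℂ) := by
  intro k hk
  have := poch_key 0 n k hk
  simpa [poch_one_eq, zero_add] using this

theorem hahn_filter_z_transform (N : ℕ) (hN : 1 ≤ N) (α β : ℝ)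
    (hα : poch ((α : ℂ) + 2) N ≠ 0)
    (hβ : ∀ k ≤ N, poch (-(β : ℂ) - N) k ≠ 0)
    (z : ℂ) (hz : z ≠ 0) :
    (Complex.Gamma ((N : ℂ) + 1) / poch ((α : ℂ) + 2) N) *
        ∑ m ∈ Finset.range N,
          (poch ((α : ℂ) + 1) m * poch ((β : ℂ) + 1) (N - m)) /
            (((N - m).factorial : ℂ) * (m.factorial : ℂ)) * z ^ (-(m : ℤ)) =
      (poch ((β : ℂ) + 1) N / poch ((α : ℂ) + 2) N) *
          ∑ k ∈ Finset.range (N + 1),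
            (poch (-(N : ℂ)) k * poch ((α : ℂ) + 1) k) /
              (poch (-(β : ℂ) - N) k * (k.factorial : ℂ)) * z ^ (-(k : ℤ)) -
        (poch ((α : ℂ) + 1) N / poch ((α : ℂ) + 2) N) * z ^ (-(N : ℤ)) := by
  have hfac : ∀ m : ℕ, ((m.factorial : ℂ)) ≠ 0 := fun m => by
    exact_mod_cast Nat.cast_ne_zero.mpr m.factorial_ne_zero
  have hgamma : Complex.Gamma ((N : ℂ) + 1) = (N.factorial : ℂ) := by
    exact_mod_cast Complex.Gamma_nat_eq_factorial N
  -- main algebraic identity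
  have E : poch ((β : ℂ) + 1) N *
      ∑ k ∈ Finset.range (N + 1),
        (poch (-(N : ℂ)) k * poch ((α : ℂ) + 1) k) /
          (poch (-(β : ℂ) - N) k * (k.factorial : ℂ)) * z ^ (-(k : ℤ)) =
      (N.factorial : ℂ) *
        ∑ m ∈ Finset.range N,
          (poch ((α : ℂ) + 1) m * poch ((β : ℂ) + 1) (N - m)) /
            (((N - m).factorial : ℂ) * (m.factorial : ℂ)) * z ^ (-(m : ℤ)) +
        poch ((α : ℂ) + 1) N * z ^ (-(N : ℤ)) := by
    rw [Finset.sum_range_succ, mul_add, Finset.mul_sum, Finset.mul_sum]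
    congr 1
    · apply Finset.sum_congr rfl
      intro k hk
      have hk' : k ≤ N := Nat.le_of_lt (Finset.mem_range.mp hk)
      have L1 := poch_key (β : ℂ) N k hk'
      have L2 := poch_nat_key N k hk'
      rw [← mul_assoc, ← mul_assoc]
      congr 1
      rw [mul_div_assoc', mul_div_assoc',
        div_eq_div_iff (mul_ne_zero (hβ k hk') (hfac k)) (mul_ne_zero (hfac _) (hfac k))]
      linear_combination (poch ((β:ℂ)+1) N * poch ((α:ℂ)+1) k * (k.factorial : ℂ)) * L2 -
        ((N.factorial : ℂ) * poch ((α:ℂ)+1) k * (k.factorial : ℂ)) * L1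
    · have L1 := poch_key (β : ℂ) N N le_rfl
      have L2 := poch_nat_key N N le_rfl
      simp only [Nat.sub_self, Nat.factorial_zero, Nat.cast_one, one_mul] at L1 L2
      have hp0 : poch ((β:ℂ)+1) 0 = 1 := by simp [poch]
      rw [hp0, one_mul] at L1
      rw [← mul_assoc]
      congr 1
      rw [mul_div_assoc', div_eq_iff (mul_ne_zero (hβ N le_rfl) (hfac N))]
      linear_combination (poch ((β:ℂ)+1) N * poch ((α:ℂ)+1) N) * L2 - ((N.factorial : ℂ) * poch ((α:ℂ)+1) N) * L1
  rw [hgamma, div_mul_eq_mul_div, div_mul_eq_mul_div, div_mul_eq_mul_div, ← sub_div, E,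
    add_sub_cancel_right]
end

section
/- Let N ≥ 1 be a natural number, let α be a real number such that (α+2)_k ≠ 0 for 0 ≤ k ≤ N, and let z be a nonzero complex number. Then the transfer function of the zeroth-order orthogonal Hahn filter with β = 0 satisfies (Γ(N+1)/(α+2)_N) · ∑_{m=0}^{N−1} [(α+1)_m/m!] · z^{−m} = (N/(N+α+1)) · z^{1−N} · ∑_{k=0}^{N−1} [(1−N)_k (1)_k]/[(α+2)_k k!] · (1−z)^k. -/
lemma poch_zero (a : ℂ) : poch a 0 = 1 := by simp [poch]

lemma poch_succ_left (a : ℂ) (n : ℕ) : poch a (n + 1) = a * poch (a + 1) n := by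
  simp [poch, ascPochhammer_succ_left, Polynomial.eval_comp]

lemma poch_one (k : ℕ) : poch 1 k = (k.factorial : ℂ) := by
  induction k with
  | zero => simp [poch]
  | succ n ih =>
    rw [poch_succ, ih, Nat.factorial_succ]
    push_cast
    ring

lemma poch_neg_nat (n : ℕ) : poch (-(n : ℂ)) (n + 1) = 0 := by
  induction n with
  | zero => simp [poch]
  | succ m ih =>
    rw [poch_succ_left]
    have h : (-((m + 1 : ℕ) : ℂ)) + 1 = -(m : ℂ) := by push_cast; ring
    rw [h, ih, mul_zero]

lemma coeff_step (α : ℝ) (n k : ℕ) (hk1 : poch ((α : ℂ) + 2) k ≠ 0)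
    (hk2 : poch ((α : ℂ) + 2) (k + 1) ≠ 0) (_hn : poch ((α : ℂ) + 2) n ≠ 0) :
    (poch ((α : ℂ) + 2) (n + 1) / ((n + 1).factorial : ℂ)) *
        (poch (-(n : ℂ) - 1) (k + 1) / poch ((α : ℂ) + 2) (k + 1)) +
      (poch ((α : ℂ) + 2) n / (n.factorial : ℂ)) *
        (poch (-(n : ℂ)) k / poch ((α : ℂ) + 2) k) =
    (poch ((α : ℂ) + 2) n / (n.factorial : ℂ)) *
        (poch (-(n : ℂ)) (k + 1) / poch ((α : ℂ) + 2) (k + 1)) := by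
  have e1 : poch ((α : ℂ) + 2) (n + 1) = poch ((α : ℂ) + 2) n * ((α : ℂ) + 2 + n) :=
    poch_succ _ _
  have e2 : poch ((α : ℂ) + 2) (k + 1) = poch ((α : ℂ) + 2) k * ((α : ℂ) + 2 + k) :=
    poch_succ _ _
  have e3 : poch (-(n : ℂ)) (k + 1) = poch (-(n : ℂ)) k * (-(n : ℂ) + k) := poch_succ _ _
  have ha : (-(n : ℂ) - 1) + 1 = -(n : ℂ) := by ring
  have e4 : poch (-(n : ℂ) - 1) (k + 1) = (-(n : ℂ) - 1) * poch (-(n : ℂ)) k := by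
    rw [poch_succ_left, ha]
  have hf : (((n + 1).factorial : ℕ) : ℂ) = ((n : ℂ) + 1) * (n.factorial : ℂ) := by
    rw [Nat.factorial_succ]; push_cast; ring
  have hak : (α : ℂ) + 2 + k ≠ 0 := by
    intro h; exact hk2 (by rw [e2, h, mul_zero])
  have hfn : (n.factorial : ℂ) ≠ 0 := Nat.cast_ne_zero.mpr n.factorial_ne_zero
  have hn1 : ((n : ℂ) + 1) ≠ 0 := Nat.cast_add_one_ne_zero n
  rw [e1, e2, e3, e4, hf]
  field_simp
  ring

lemma key (α : ℝ) (n : ℕ) (hα : ∀ k ≤ n, poch ((α : ℂ) + 2) k ≠ 0) (z : ℂ) :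
    ∑ m ∈ Finset.range (n + 1),
        (poch ((α : ℂ) + 1) m / (m.factorial : ℂ)) * z ^ (n - m) =
      (poch ((α : ℂ) + 2) n / (n.factorial : ℂ)) *
        ∑ k ∈ Finset.range (n + 1),
          (poch (-(n : ℂ)) k / poch ((α : ℂ) + 2) k) * (1 - z) ^ k := by
  induction n with
  | zero => simp [poch]
  | succ n ih =>
    have hα' : ∀ k ≤ n, poch ((α : ℂ) + 2) k ≠ 0 := fun k hk => hα k (by omega)
    have IH := ih hα'
    have hcast : (-(((n : ℕ) + 1 : ℕ) : ℂ)) = -(n : ℂ) - 1 := by push_cast; ring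
    -- rewrite the left-hand sum
    rw [Finset.sum_range_succ]
    have h1 : ∀ m ∈ Finset.range (n + 1),
        (poch ((α : ℂ) + 1) m / (m.factorial : ℂ)) * z ^ (n + 1 - m) =
        z * ((poch ((α : ℂ) + 1) m / (m.factorial : ℂ)) * z ^ (n - m)) := by
      intro m hm
      have hm' : m ≤ n := by simpa [Nat.lt_succ_iff] using hm
      have : n + 1 - m = (n - m) + 1 := by omega
      rw [this, pow_succ]; ring
    rw [Finset.sum_congr rfl h1, ← Finset.mul_sum, IH, Nat.sub_self, pow_zero]
    set w : ℂ := 1 - z with hw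
    have hz2 : z = 1 - w := by rw [hw]; ring
    rw [hz2]
    simp only [hcast]
    -- abbreviations
    have hT : ∑ k ∈ Finset.range (n + 1),
        (poch (-(n : ℂ)) k / poch ((α : ℂ) + 2) k) * w ^ k =
        (∑ k ∈ Finset.range (n + 1),
          (poch (-(n : ℂ)) (k + 1) / poch ((α : ℂ) + 2) (k + 1)) * w ^ (k + 1)) + 1 := by
      have hext : ∑ k ∈ Finset.range (n + 1),
          (poch (-(n : ℂ)) k / poch ((α : ℂ) + 2) k) * w ^ k =
          ∑ k ∈ Finset.range (n + 2),
          (poch (-(n : ℂ)) k / poch ((α : ℂ) + 2) k) * w ^ k := by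
        conv_rhs => rw [Finset.sum_range_succ]
        rw [poch_neg_nat, zero_div, zero_mul, add_zero]
      rw [hext, Finset.sum_range_succ']
      simp [poch_zero]
    have hT' : ∑ k ∈ Finset.range (n + 2),
        (poch (-(n : ℂ) - 1) k / poch ((α : ℂ) + 2) k) * w ^ k =
        (∑ k ∈ Finset.range (n + 1),
          (poch (-(n : ℂ) - 1) (k + 1) / poch ((α : ℂ) + 2) (k + 1)) * w ^ (k + 1)) + 1 := by
      rw [Finset.sum_range_succ']
      simp [poch_zero]
    have hU : w * ∑ k ∈ Finset.range (n + 1),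
        (poch (-(n : ℂ)) k / poch ((α : ℂ) + 2) k) * w ^ k =
        ∑ k ∈ Finset.range (n + 1),
          (poch (-(n : ℂ)) k / poch ((α : ℂ) + 2) k) * w ^ (k + 1) := by
      rw [Finset.mul_sum]
      exact Finset.sum_congr rfl fun k _ => by rw [pow_succ]; ring
    have hsum : (poch ((α : ℂ) + 2) (n + 1) / ((n + 1).factorial : ℂ)) *
          (∑ k ∈ Finset.range (n + 1),
            (poch (-(n : ℂ) - 1) (k + 1) / poch ((α : ℂ) + 2) (k + 1)) * w ^ (k + 1)) +
        (poch ((α : ℂ) + 2) n / (n.factorial : ℂ)) *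
          (∑ k ∈ Finset.range (n + 1),
            (poch (-(n : ℂ)) k / poch ((α : ℂ) + 2) k) * w ^ (k + 1)) =
        (poch ((α : ℂ) + 2) n / (n.factorial : ℂ)) *
          (∑ k ∈ Finset.range (n + 1),
            (poch (-(n : ℂ)) (k + 1) / poch ((α : ℂ) + 2) (k + 1)) * w ^ (k + 1)) := by
      rw [Finset.mul_sum, Finset.mul_sum, Finset.mul_sum, ← Finset.sum_add_distrib]
      refine Finset.sum_congr rfl fun k hk => ?_
      have hk' : k ≤ n := by simpa [Nat.lt_succ_iff] using hk
      have hcoeff := coeff_step α n k (hα k (by omega)) (hα (k + 1) (by omega))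
        (hα n (by omega))
      linear_combination w ^ (k + 1) * hcoeff
    have hC : poch ((α : ℂ) + 2) (n + 1) / ((n + 1).factorial : ℂ) =
        poch ((α : ℂ) + 2) n / (n.factorial : ℂ) +
          poch ((α : ℂ) + 1) (n + 1) / ((n + 1).factorial : ℂ) := by
      have e1 : poch ((α : ℂ) + 2) (n + 1) = poch ((α : ℂ) + 2) n * ((α : ℂ) + 2 + n) :=
        poch_succ _ _
      have ha : ((α : ℂ) + 1) + 1 = (α : ℂ) + 2 := by ring
      have e2 : poch ((α : ℂ) + 1) (n + 1) = ((α : ℂ) + 1) * poch ((α : ℂ) + 2) n := by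
        rw [poch_succ_left, ha]
      have hf : (((n + 1).factorial : ℕ) : ℂ) = ((n : ℂ) + 1) * (n.factorial : ℂ) := by
        rw [Nat.factorial_succ]; push_cast; ring
      have hfn : (n.factorial : ℂ) ≠ 0 := Nat.cast_ne_zero.mpr n.factorial_ne_zero
      have hn1 : ((n : ℂ) + 1) ≠ 0 := Nat.cast_add_one_ne_zero n
      rw [e1, e2, hf]
      field_simp
      ring
    linear_combination (poch ((α : ℂ) + 2) n / (n.factorial : ℂ)) * hT -
      (poch ((α : ℂ) + 2) n / (n.factorial : ℂ)) * hU -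
      (poch ((α : ℂ) + 2) (n + 1) / ((n + 1).factorial : ℂ)) * hT' - hsum - hC

theorem hahn_filter_transfer_function (N : ℕ) (hN : 1 ≤ N) (α : ℝ)
    (hα : ∀ k ≤ N, poch ((α : ℂ) + 2) k ≠ 0)
    (z : ℂ) (hz : z ≠ 0) :
    (Complex.Gamma ((N : ℂ) + 1) / poch ((α : ℂ) + 2) N) *
        ∑ m ∈ Finset.range N,
          (poch ((α : ℂ) + 1) m / (m.factorial : ℂ)) * z ^ (-(m : ℤ)) =
      ((N : ℂ) / ((N : ℂ) + α + 1)) * z ^ ((1 : ℤ) - N) *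
        ∑ k ∈ Finset.range N,
          (poch (1 - (N : ℂ)) k * poch 1 k) /
            (poch ((α : ℂ) + 2) k * (k.factorial : ℂ)) * (1 - z) ^ k := by
  obtain ⟨n, rfl⟩ : ∃ n, N = n + 1 := ⟨N - 1, by omega⟩
  have hkey := key α n (fun k hk => hα k (by omega)) z
  have hfk : ∀ k : ℕ, (k.factorial : ℂ) ≠ 0 :=
    fun k => Nat.cast_ne_zero.mpr k.factorial_ne_zero
  have hsumR : ∀ k ∈ Finset.range (n + 1),
      (poch (1 - (((n + 1 : ℕ)) : ℂ)) k * poch 1 k) /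
          (poch ((α : ℂ) + 2) k * (k.factorial : ℂ)) * (1 - z) ^ k =
        (poch (-(n : ℂ)) k / poch ((α : ℂ) + 2) k) * (1 - z) ^ k := by
    intro k hk
    have h1 : (1 - (((n + 1 : ℕ)) : ℂ)) = -(n : ℂ) := by push_cast; ring
    rw [h1, poch_one, mul_div_mul_comm, div_self (hfk k), mul_one]
  have hsumL : ∀ m ∈ Finset.range (n + 1),
      (poch ((α : ℂ) + 1) m / (m.factorial : ℂ)) * z ^ (-(m : ℤ)) =
        z ^ ((1 : ℤ) - ((n + 1 : ℕ) : ℤ)) *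
          ((poch ((α : ℂ) + 1) m / (m.factorial : ℂ)) * z ^ (n - m)) := by
    intro m hm
    have hm' : m ≤ n := by simpa [Nat.lt_succ_iff] using hm
    have he : (-(m : ℤ)) = ((1 : ℤ) - ((n + 1 : ℕ) : ℤ)) + ((n - m : ℕ) : ℤ) := by
      push_cast [Nat.cast_sub hm']
      ring
    rw [he, zpow_add₀ hz, zpow_natCast]
    ring
  rw [Finset.sum_congr rfl hsumL, ← Finset.mul_sum, hkey, Finset.sum_congr rfl hsumR]
  have hG : Complex.Gamma ((((n + 1 : ℕ)) : ℂ) + 1) = (((n + 1).factorial : ℕ) : ℂ) :=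
    Complex.Gamma_nat_eq_factorial (n + 1)
  have e1 : poch ((α : ℂ) + 2) (n + 1) = poch ((α : ℂ) + 2) n * ((α : ℂ) + 2 + n) :=
    poch_succ _ _
  have hPn : poch ((α : ℂ) + 2) n ≠ 0 := hα n (by omega)
  have hP1 : poch ((α : ℂ) + 2) (n + 1) ≠ 0 := hα (n + 1) (by omega)
  have han : (α : ℂ) + 2 + n ≠ 0 := by
    intro h; exact hP1 (by rw [e1, h, mul_zero])
  have hcast2 : (((n + 1 : ℕ)) : ℂ) + α + 1 = (α : ℂ) + 2 + n := by push_cast; ring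
  have hf : (((n + 1).factorial : ℕ) : ℂ) = ((n : ℂ) + 1) * (n.factorial : ℂ) := by
    rw [Nat.factorial_succ]; push_cast; ring
  have hconst : (((n + 1).factorial : ℕ) : ℂ) / poch ((α : ℂ) + 2) (n + 1) *
      (poch ((α : ℂ) + 2) n / (n.factorial : ℂ)) =
      (((n + 1 : ℕ)) : ℂ) / ((((n + 1 : ℕ)) : ℂ) + α + 1) := by
    rw [hcast2, e1, hf]
    have hfn : (n.factorial : ℂ) ≠ 0 := hfk n
    have hc3 : (((n + 1 : ℕ)) : ℂ) = (n : ℂ) + 1 := by push_cast; ring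
    rw [hc3]
    field_simp
  rw [hG]
  linear_combination (z ^ ((1 : ℤ) - ((n + 1 : ℕ) : ℤ)) *
    ∑ k ∈ Finset.range (n + 1),
      (poch (-(n : ℂ)) k / poch ((α : ℂ) + 2) k) * (1 - z) ^ k) * hconst
end
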